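/- arXiv:0802.1387 — 2 statements merged into one kernel-verified Lean document; each statement's English description precedes it below -/
import Mathlib

section
/- For all i, j, ℓ ∈ {1,...,m}, Φ_ℓ(i,j) = [C(m-i, ℓ-1) · 1_{m-i ≥ ℓ-1} − C(j-i, ℓ-1) · 1_{j-i ≥ ℓ-1}] / (m-1)^ℓ, where Φ_ℓ(i,j) is the conditional probability given X_1 = i that the first ascending run has length ℓ and the next run starts with value j, i.e., P(i < X_2 < ... < X_ℓ > X_{ℓ+1} = j | X_1 = i). -/
/-!
Given `X 1 = i`, the event says that the path `(X 1, …, X (ℓ + 1))` is `(i, q₂, …, q_ℓ, j)` with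
`i < q₂ < ⋯ < q_ℓ > j`. Neighbouring entries of such a path differ, so when all entries lie in
`{1, …, m}` its probability is `m⁻¹ (m - 1)⁻ℓ` (otherwise `0`), against `P(X 1 = i) = m⁻¹`.
An increasing run `i < q₂ < ⋯ < q_ℓ ≤ m` is an `(ℓ - 1)`-subset of `{i + 1, …, m}`, which gives
`C(m - i, ℓ - 1)` runs; the runs whose top is `≤ j` are the subsets of `{i + 1, …, j}`, and these
are removed.
-/

open MeasureTheory Finset
open scoped ENNReal

noncomputable def condP {Ω : Type*} [MeasurableSpace Ω] (μ : MeasureTheory.Measure Ω)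
    (A B : Set Ω) : ℝ := (μ (A ∩ B)).toReal / (μ B).toReal

section Runs
open scoped Classical
variable {α : Type*} [LinearOrder α]

theorem card_filter_strictMono_piFinset (s : Finset α) (r : ℕ) :
    #{f ∈ Fintype.piFinset fun _ : Fin r => s | StrictMono f} = (#s).choose r := by
  rw [← card_powersetCard]
  refine card_bij (fun f _ => univ.image f) (fun f hf => ?_) (fun f hf g hg hfg => ?_)
    (fun t ht => ?_)
  · simp only [mem_filter, Fintype.mem_piFinset] at hf
    rw [mem_powersetCard, card_image_of_injective _ hf.2.injective, card_univ, Fintype.card_fin]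
    exact ⟨fun x hx => by obtain ⟨t, -, rfl⟩ := mem_image.1 hx; exact hf.1 t, rfl⟩
  · simp only [mem_filter] at hf hg
    have hcard : #(univ.image g) = r := by
      rw [card_image_of_injective _ hg.2.injective, card_univ, Fintype.card_fin]
    have hg' := orderEmbOfFin_unique hcard (fun x => mem_image_of_mem g (mem_univ x)) hg.2
    have hf' := orderEmbOfFin_unique hcard
      (fun x => hfg ▸ mem_image_of_mem f (mem_univ x)) hf.2
    exact hf'.trans hg'.symm
  · rw [mem_powersetCard] at ht
    refine ⟨t.orderEmbOfFin ht.2, ?_, ?_⟩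
    · simp only [mem_filter, Fintype.mem_piFinset]
      exact ⟨fun x => ht.1 (orderEmbOfFin_mem t ht.2 x), (t.orderEmbOfFin ht.2).strictMono⟩
    · exact image_orderEmbOfFin_univ t ht.2

theorem card_filter_strictMono_cons_piFinset {s : Finset α} {a : α} (ha : a ∈ s) (r : ℕ) :
    #{q ∈ Fintype.piFinset fun _ : Fin (r + 1) => s | q 0 = a ∧ StrictMono q} =
      (#{x ∈ s | a < x}).choose r := by
  rw [← card_filter_strictMono_piFinset]
  refine card_nbij' Fin.tail (fun f => (Fin.cons a f : Fin (r + 1) → α)) (fun q hq => ?_)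
    (fun f hf => ?_) (fun q hq => ?_) (fun f _ => by simp)
  · simp only [coe_filter, Fintype.mem_piFinset, Set.mem_ofPred_eq, mem_filter] at hq ⊢
    obtain ⟨hs, rfl, hmono⟩ := hq
    rw [← Fin.cons_self_tail q, Fin.strictMono_cons] at hmono
    exact ⟨fun t => ⟨hs _, hmono.1 t⟩, hmono.2⟩
  · simp only [coe_filter, Fintype.mem_piFinset, Set.mem_ofPred_eq, mem_filter] at hf ⊢
    refine ⟨fun t => Fin.cases ha (fun t => (hf.1 t).1) t, rfl, ?_⟩
    exact Fin.strictMono_cons.2 ⟨fun t => (hf.1 t).2, hf.2⟩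
  · simp only [coe_filter, Set.mem_ofPred_eq] at hq
    simp only [← hq.2.1, Fin.cons_self_tail]

theorem card_filter_snoc_piFinset {s : Finset α} {b : α} (hb : b ∈ s) {n : ℕ}
    (P : (Fin n → α) → Prop) :
    #{p ∈ Fintype.piFinset fun _ : Fin (n + 1) => s | P (Fin.init p) ∧ p (Fin.last n) = b} =
      #{q ∈ Fintype.piFinset fun _ : Fin n => s | P q} := by
  refine card_nbij' Fin.init (fun q => Fin.snoc q b) (fun p hp => ?_) (fun q hq => ?_)
    (fun p hp => ?_) (fun q _ => Fin.init_snoc _ _)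
  · simp only [coe_filter, Fintype.mem_piFinset, Set.mem_ofPred_eq] at hp ⊢
    exact ⟨fun t => hp.1 _, hp.2.1⟩
  · simp only [coe_filter, Fintype.mem_piFinset, Set.mem_ofPred_eq] at hq ⊢
    refine ⟨fun t => Fin.lastCases ?_ (fun t => ?_) t, by simpa using hq.2, by simp⟩
    · simpa using hb
    · simpa using hq.1 t
  · simp only [coe_filter, Set.mem_ofPred_eq] at hp
    simp only [← hp.2.2, Fin.snoc_init_self]

def IsRunEndingAbove (a b : α) {r : ℕ} (q : Fin (r + 1) → α) : Prop :=
  q 0 = a ∧ StrictMono q ∧ b < q (Fin.last r)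

theorem IsRunEndingAbove.succ_ne_castSucc {a b : α} {r : ℕ}
    {p : Fin (r + 2) → α} (hrun : IsRunEndingAbove a b (Fin.init p)) (hlast : p (Fin.last _) = b)
    (t : Fin (r + 1)) : p t.succ ≠ p t.castSucc := by
  induction t using Fin.lastCases with
  | last => rw [Fin.succ_last, hlast]; exact hrun.2.2.ne
  | cast t => rw [Fin.succ_castSucc]; exact (hrun.2.1 Fin.castSucc_lt_succ).ne'

theorem card_isRunEndingAbove {m i j : ℕ} (hi : i ∈ Icc 1 m) (hj : j ≤ m) (r : ℕ) :
    #{q ∈ Fintype.piFinset fun _ : Fin (r + 1) => Icc 1 m | IsRunEndingAbove i j q} =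
      (m - i).choose r - if i ≤ j then (j - i).choose r else 0 := by
  set runs := fun b =>
    {q ∈ Fintype.piFinset fun _ : Fin (r + 1) => Icc 1 b | q 0 = i ∧ StrictMono q}
  have card_runs {b : ℕ} (hb : i ≤ b) : #(runs b) = (b - i).choose r := by
    rw [card_filter_strictMono_cons_piFinset (mem_Icc.2 ⟨(mem_Icc.1 hi).1, hb⟩), ← Nat.card_Ioc]
    congr 2
    ext x
    simp only [mem_filter, mem_Icc, mem_Ioc]
    have := (mem_Icc.1 hi).1
    omega
  have hsplit : {q ∈ Fintype.piFinset fun _ : Fin (r + 1) => Icc 1 m | IsRunEndingAbove i j q} =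
      runs m \ runs j := by
    ext q
    simp only [runs, mem_sdiff, mem_filter, Fintype.mem_piFinset, mem_Icc]
    unfold IsRunEndingAbove
    constructor
    · rintro ⟨hq, h0, hmono, hlast⟩
      exact ⟨⟨hq, h0, hmono⟩, fun h => absurd (h.1 (Fin.last r)).2 (not_le.2 hlast)⟩
    · rintro ⟨⟨hq, h0, hmono⟩, hnot⟩
      refine ⟨hq, h0, hmono, not_le.1 fun hle => hnot ⟨fun t => ⟨(hq t).1, ?_⟩, h0, hmono⟩⟩
      exact (hmono.monotone (Fin.le_last t)).trans hle
  have hsub : runs j ⊆ runs m :=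
    monotone_filter_left _ (Fintype.piFinset_subset _ _ fun _ => Icc_subset_Icc_right hj)
  rw [hsplit, card_sdiff_of_subset hsub, card_runs (mem_Icc.1 hi).2]
  split_ifs with hij
  · rw [card_runs hij]
  · rw [card_eq_zero.2 (filter_eq_empty_iff.2 fun q hq h => ?_)]
    have := (Fintype.mem_piFinset.1 hq 0)
    rw [h.1, mem_Icc] at this
    omega

/-- The comparison in `ℤ` matters only for `r = 0` and `j < i`, where `(j - i).choose 0 = 1`. -/
theorem cast_card_isRunEndingAbove {m i j : ℕ} (hi : i ∈ Icc 1 m) (hj : j ≤ m) (r : ℕ) :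
    (#{q ∈ Fintype.piFinset fun _ : Fin (r + 1) => Icc 1 m | IsRunEndingAbove i j q} : ℝ) =
      (if r ≤ m - i then ((m - i).choose r : ℝ) else 0) -
        (if (r : ℤ) ≤ (j : ℤ) - (i : ℤ) then ((j - i).choose r : ℝ) else 0) := by
  have hi1 := (mem_Icc.1 hi).1
  have hfirst : (if r ≤ m - i then ((m - i).choose r : ℝ) else 0) = (m - i).choose r := by
    split_ifs with h
    · rfl
    · rw [Nat.choose_eq_zero_of_lt (not_le.1 h), Nat.cast_zero]
  rw [card_isRunEndingAbove hi hj, hfirst]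
  split_ifs with hij hr hr
  · rw [Nat.cast_sub (Nat.choose_le_choose r (by omega))]
  · rw [Nat.choose_eq_zero_of_lt (n := j - i) (by omega), Nat.sub_zero, sub_zero]
  · omega
  · rw [Nat.sub_zero, sub_zero]

end Runs

theorem measure_preimage_eq_card_mul {Ω β : Type*} [MeasurableSpace Ω] [MeasurableSpace β]
    [MeasurableSingletonClass β] [Countable β] {μ : Measure Ω} {f : Ω → β} (hf : Measurable f)
    {S : Set β} {F : Finset β} {c : ℝ≥0∞} (hFS : ↑F ⊆ S) (hF : ∀ b ∈ F, μ (f ⁻¹' {b}) = c)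
    (hS : ∀ b ∈ S, b ∉ F → μ (f ⁻¹' {b}) = 0) : μ (f ⁻¹' S) = #F * c := by
  have hnull : μ (f ⁻¹' (S \ F)) = 0 :=
    (measure_preimage_eq_zero_iff_of_countable (S \ ↑F).to_countable).2 fun b hb => hS b hb.1 hb.2
  calc μ (f ⁻¹' S) = μ (f ⁻¹' S \ f ⁻¹' (S \ F)) := (measure_sdiff_null hnull).symm
    _ = μ (f ⁻¹' F) := by rw [← Set.preimage_sdiff, Set.sdiff_sdiff_cancel_left hFS]
    _ = ∑ b ∈ F, μ (f ⁻¹' {b}) :=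
      (sum_measure_preimage_singleton F fun b _ => hf (measurableSet_singleton b)).symm
    _ = #F * c := by rw [sum_congr rfl hF, sum_const, nsmul_eq_mul]

def firstValues {Ω : Type*} (X : ℕ → Ω → ℕ) (n : ℕ) (ω : Ω) : Fin n → ℕ := fun t => X (t + 1) ω

theorem setOf_run_inter_eq_preimage_firstValues {Ω : Type*} (X : ℕ → Ω → ℕ) (i j r : ℕ) :
    {ω | (∀ k, 1 ≤ k → k < r + 1 → X k ω < X (k + 1) ω) ∧
        X (r + 1 + 1) ω = j ∧ X (r + 1 + 1) ω < X (r + 1) ω} ∩ {ω | X 1 ω = i} =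
      firstValues X (r + 2) ⁻¹' {p | IsRunEndingAbove i j (Fin.init p) ∧ p (Fin.last _) = j} := by
  ext ω
  simp only [Set.mem_inter_iff, Set.mem_ofPred_eq, Set.mem_preimage, IsRunEndingAbove, Fin.init,
    firstValues, Fin.strictMono_iff_lt_succ, Fin.forall_iff, Fin.val_castSucc, Fin.val_succ,
    Fin.val_last, Fin.val_zero, zero_add]
  constructor
  · rintro ⟨⟨hinc, hj, hlt⟩, hi⟩
    exact ⟨⟨hi, fun k hk => hinc (k + 1) le_add_self (by omega), hj ▸ hlt⟩, hj⟩
  · rintro ⟨⟨hi, hinc, hlt⟩, hj⟩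
    refine ⟨⟨fun k hk1 hk => ?_, hj, hj ▸ hlt⟩, hi⟩
    obtain ⟨k, rfl⟩ : ∃ k', k = k' + 1 := ⟨k - 1, by omega⟩
    exact hinc k (by omega)

section Chain
variable {Ω : Type*} [MeasurableSpace Ω] {μ : Measure Ω} {m : ℕ} {X : ℕ → Ω → ℕ}

def IsUniformJumpChain (μ : Measure Ω) (m : ℕ) (X : ℕ → Ω → ℕ) : Prop :=
  ∀ n, 1 ≤ n → ∀ f : ℕ → ℕ,
    μ {ω | ∀ k, 1 ≤ k → k ≤ n → X k ω = f k} =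
      (if f 1 ∈ Finset.Icc 1 m then (1 : ℝ≥0∞) / m else 0) *
        ∏ k ∈ Finset.Icc 1 (n - 1),
          (if f (k + 1) ∈ Finset.Icc 1 m ∧ f (k + 1) ≠ f k then (1 : ℝ≥0∞) / (m - 1) else 0)

theorem IsUniformJumpChain.measure_firstValues_preimage_singleton (h : IsUniformJumpChain μ m X)
    {k : ℕ} (p : Fin (k + 1) → ℕ) :
    μ (firstValues X (k + 1) ⁻¹' {p}) =
      (if p 0 ∈ Icc 1 m then (1 : ℝ≥0∞) / m else 0) *
        ∏ t : Fin k,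
          (if p t.succ ∈ Icc 1 m ∧ p t.succ ≠ p t.castSucc then (1 : ℝ≥0∞) / (m - 1) else 0) := by
  set f : ℕ → ℕ := fun n => if hn : n - 1 < k + 1 then p ⟨n - 1, hn⟩ else 0
  have hf (t : Fin (k + 1)) : f (t + 1) = p t := by
    simp only [f, Nat.add_sub_cancel, dif_pos t.isLt]
  have hcyl : firstValues X (k + 1) ⁻¹' {p} = {ω | ∀ n, 1 ≤ n → n ≤ k + 1 → X n ω = f n} := by
    ext ω
    simp only [Set.mem_preimage, Set.mem_singleton_iff, funext_iff, firstValues, Set.mem_ofPred_eq]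
    constructor
    · intro hω n h1 h2
      obtain ⟨t, rfl⟩ : ∃ t : Fin (k + 1), n = t + 1 := ⟨⟨n - 1, by omega⟩, by simp; omega⟩
      rw [hω, hf]
    · intro hω t
      rw [hω _ le_add_self t.isLt, hf]
  rw [hcyl, h (k + 1) le_add_self f, show f 1 = p 0 from hf 0, Nat.add_sub_cancel]
  congr 1
  refine (prod_bij (fun (t : Fin k) _ => t.val + 1) (fun t _ => by simp)
    (fun _ _ _ _ h => Fin.ext (by simpa using h))
    (fun n hn => ⟨⟨n - 1, by simp at hn; omega⟩, mem_univ _, by simp at hn ⊢; omega⟩)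
    (fun t _ => ?_)).symm
  rw [← hf t.succ, ← hf t.castSucc]
  rfl

theorem IsUniformJumpChain.measure_firstValues_preimage_singleton_of_mem
    (h : IsUniformJumpChain μ m X) {k : ℕ} {p : Fin (k + 1) → ℕ} (hp : ∀ t, p t ∈ Icc 1 m)
    (hne : ∀ t : Fin k, p t.succ ≠ p t.castSucc) :
    μ (firstValues X (k + 1) ⁻¹' {p}) = 1 / m * ((1 : ℝ≥0∞) / (m - 1)) ^ k := by
  rw [h.measure_firstValues_preimage_singleton, if_pos (hp 0),
    prod_congr rfl fun t _ => if_pos ⟨hp _, hne t⟩, prod_const, card_univ, Fintype.card_fin]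

theorem IsUniformJumpChain.measure_firstValues_preimage_singleton_of_notMem
    (h : IsUniformJumpChain μ m X) {k : ℕ} {p : Fin (k + 1) → ℕ} {t : Fin (k + 1)}
    (ht : p t ∉ Icc 1 m) : μ (firstValues X (k + 1) ⁻¹' {p}) = 0 := by
  rw [h.measure_firstValues_preimage_singleton]
  induction t using Fin.cases with
  | zero => rw [if_neg ht, zero_mul]
  | succ t => rw [prod_eq_zero (mem_univ t) (if_neg fun h => ht h.1), mul_zero]

theorem IsUniformJumpChain.measure_first_eq (h : IsUniformJumpChain μ m X) {i : ℕ}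
    (hi : i ∈ Icc 1 m) : μ {ω | X 1 ω = i} = 1 / m := by
  have hset : {ω | X 1 ω = i} = firstValues X 1 ⁻¹' {fun _ => i} := by
    ext ω
    simp [firstValues, funext_iff]
  rw [hset, h.measure_firstValues_preimage_singleton_of_mem (fun _ => hi) finZeroElim, pow_zero,
    mul_one]

open scoped Classical in
theorem IsUniformJumpChain.measure_run (h : IsUniformJumpChain μ m X)
    (hX : ∀ k, Measurable (X k)) {i j : ℕ} (hj : j ∈ Icc 1 m) (r : ℕ) :
    μ (firstValues X (r + 2) ⁻¹' {p | IsRunEndingAbove i j (Fin.init p) ∧ p (Fin.last _) = j}) =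
      #{q ∈ Fintype.piFinset fun _ : Fin (r + 1) => Icc 1 m | IsRunEndingAbove i j q} *
        (1 / m * ((1 : ℝ≥0∞) / (m - 1)) ^ (r + 1)) := by
  rw [← card_filter_snoc_piFinset hj]
  refine measure_preimage_eq_card_mul (measurable_pi_lambda _ fun t => hX _)
    (fun p hp => (mem_filter.1 hp).2) (fun p hp => ?_) (fun p hp hpF => ?_)
  · obtain ⟨hp, hrun, hlast⟩ := mem_filter.1 hp
    exact h.measure_firstValues_preimage_singleton_of_mem (Fintype.mem_piFinset.1 hp)
      (hrun.succ_ne_castSucc hlast)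
  · obtain ⟨t, ht⟩ : ∃ t, p t ∉ Icc 1 m := by
      by_contra! hall
      exact hpF (mem_filter.2 ⟨Fintype.mem_piFinset.2 hall, hp⟩)
    exact h.measure_firstValues_preimage_singleton_of_notMem ht

end Chain

theorem Phi_formula_general {Ω : Type*} [MeasurableSpace Ω] (μ : Measure Ω)
    (m : ℕ) (X : ℕ → Ω → ℕ)
    (hX : ∀ k, Measurable (X k))
    (hLaw : ∀ n, 1 ≤ n → ∀ f : ℕ → ℕ,
      μ {ω | ∀ k, 1 ≤ k → k ≤ n → X k ω = f k} =
        (if f 1 ∈ Finset.Icc 1 m then (1 : ℝ≥0∞) / m else 0) *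
          ∏ k ∈ Finset.Icc 1 (n - 1),
            (if f (k + 1) ∈ Finset.Icc 1 m ∧ f (k + 1) ≠ f k then (1 : ℝ≥0∞) / (m - 1) else 0))
    (i j ℓ : ℕ) (hi : i ∈ Finset.Icc 1 m) (hj : j ∈ Finset.Icc 1 m)
    (hℓ : ℓ ∈ Finset.Icc 1 m) :
    condP μ {ω | (∀ k, 1 ≤ k → k < ℓ → X k ω < X (k + 1) ω) ∧
        X (ℓ + 1) ω = j ∧ X (ℓ + 1) ω < X ℓ ω} {ω | X 1 ω = i} =
      ((if ℓ - 1 ≤ m - i then (((m - i).choose (ℓ - 1) : ℕ) : ℝ) else 0)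
        - (if (ℓ : ℤ) - 1 ≤ (j : ℤ) - (i : ℤ) then (((j - i).choose (ℓ - 1) : ℕ) : ℝ) else 0))
        / ((m - 1 : ℕ) : ℝ) ^ ℓ := by
  obtain ⟨r, rfl⟩ : ∃ r, ℓ = r + 1 := ⟨ℓ - 1, by grind⟩
  have hchain : IsUniformJumpChain μ m X := hLaw
  rw [condP, setOf_run_inter_eq_preimage_firstValues, hchain.measure_run hX hj,
    hchain.measure_first_eq hi]
  simp only [Nat.add_sub_cancel, Nat.cast_add, Nat.cast_one, add_sub_cancel_right]
  rw [← cast_card_isRunEndingAbove hi (mem_Icc.1 hj).2,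
    show (m : ℝ≥0∞) - 1 = ((m - 1 : ℕ) : ℝ≥0∞) by rw [ENNReal.natCast_sub, Nat.cast_one]]
  have hm : (m : ℝ) ≠ 0 := Nat.cast_ne_zero.2 (by grind)
  simp only [one_div, ENNReal.toReal_mul, ENNReal.toReal_pow, ENNReal.toReal_inv,
    ENNReal.toReal_natCast]
  field_simp
  ring

/-- For i, j, ℓ ∈ {1,...,m},
Φ_ℓ(i,j) = P(i < X_2 < ... < X_ℓ > X_{ℓ+1} = j | X_1 = i)
  = [C(m-i,ℓ-1)·1_{m-i ≥ ℓ-1} − C(j-i,ℓ-1)·1_{j-i ≥ ℓ-1}]/(m-1)^ℓ. -/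
theorem Phi_formula {Ω : Type*} [MeasurableSpace Ω] (μ : Measure Ω)
    [IsProbabilityMeasure μ] (m : ℕ) (hm : 2 ≤ m) (X : ℕ → Ω → ℕ)
    (hX : ∀ k, Measurable (X k))
    (hLaw : ∀ n, 1 ≤ n → ∀ f : ℕ → ℕ,
      μ {ω | ∀ k, 1 ≤ k → k ≤ n → X k ω = f k} =
        (if f 1 ∈ Finset.Icc 1 m then (1 : ℝ≥0∞) / m else 0) *
          ∏ k ∈ Finset.Icc 1 (n - 1),
            (if f (k + 1) ∈ Finset.Icc 1 m ∧ f (k + 1) ≠ f k then (1 : ℝ≥0∞) / (m - 1) else 0))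
    (i j ℓ : ℕ) (hi : i ∈ Finset.Icc 1 m) (hj : j ∈ Finset.Icc 1 m)
    (hℓ : ℓ ∈ Finset.Icc 1 m) :
    condP μ {ω | (∀ k, 1 ≤ k → k < ℓ → X k ω < X (k + 1) ω) ∧
        X (ℓ + 1) ω = j ∧ X (ℓ + 1) ω < X ℓ ω} {ω | X 1 ω = i} =
      ((if ℓ - 1 ≤ m - i then (((m - i).choose (ℓ - 1) : ℕ) : ℝ) else 0)
        - (if (ℓ : ℤ) - 1 ≤ (j : ℤ) - (i : ℤ) then (((j - i).choose (ℓ - 1) : ℕ) : ℝ) else 0))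
        / ((m - 1 : ℕ) : ℝ) ^ ℓ :=
  Phi_formula_general μ m X hX hLaw i j ℓ hi hj hℓ
end

section
/- The process Y = (V_k, L_k)_{k≥1} of successive ascending runs (value of the first element and length of the k-th run) is a homogeneous Markov chain, with transition probabilities P((i,ℓ),(j,λ)) = Φ_ℓ(i,j)·φ_λ(j)/φ_ℓ(i) for (i,ℓ) ∈ E ∪ {(m,1)} and (j,λ) ∈ E. -/
/-!
Let `s` be the position at which run `k + 1` starts when the first `k` runs are prescribed
by `h`. The history of the first `k` runs is determined by `X 1, …, X s` (run `k` ends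
because `X s < X (s - 1)`), while run `k + 1` is determined by `X s, X (s + 1), …`. Since
`s` is a deterministic time once `h` is fixed, the Markov property at `s` factorises the
probability of a history run by run: appending a run `(i, ℓ)` followed by the start value `j`
multiplies it by `P(X 1 = i, L 1 = ℓ, V 2 = j) / P(X 1 = i)`. In the conditional probability
the common prefix cancels, which leaves `Φ_ℓ(i, j) φ_λ(j) / φ_ℓ(i)`. Nothing specific to the
transition law enters, so the same holds for every Markov chain on `ℕ`.
-/

open MeasureTheory
open scoped ENNReal

/-- `runStart X ω k` is the starting position of the (k+1)-st maximal ascending run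
of the sequence (X_n ω)_{n ≥ 1} (with X_0 = ∞): the first run starts at 1, and each
subsequent run starts at the first descent after the previous start. -/
noncomputable def runStart {Ω : Type*} (X : ℕ → Ω → ℕ) (ω : Ω) : ℕ → ℕ
  | 0 => 1
  | k + 1 => sInf {t | runStart X ω k < t ∧ X t ω < X (t - 1) ω}

/-- `V X k ω`: the value of the first element of the k-th ascending run. -/
noncomputable def V {Ω : Type*} (X : ℕ → Ω → ℕ) (k : ℕ) (ω : Ω) : ℕ :=
  X (runStart X ω (k - 1)) ω

/-- `L X k ω`: the length of the k-th ascending run. -/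
noncomputable def L {Ω : Type*} (X : ℕ → Ω → ℕ) (k : ℕ) (ω : Ω) : ℕ :=
  runStart X ω k - runStart X ω (k - 1)

lemma Finset.prod_Icc_one_eq_prod_range {M : Type*} [CommMonoid M] (g : ℕ → M) (n : ℕ) :
    ∏ k ∈ Finset.Icc 1 n, g k = ∏ r ∈ Finset.range n, g (1 + r) := by
  rw [← Finset.Ico_add_one_right_eq_Icc, Finset.prod_Ico_eq_prod_range, Nat.add_sub_cancel]

lemma ENNReal.tsum_mul_tsum_eq_tsum_prod {α β : Type*} (f : α → ℝ≥0∞) (g : β → ℝ≥0∞) :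
    (∑' a, f a) * ∑' b, g b = ∑' p : α × β, f p.1 * g p.2 := by
  rw [ENNReal.tsum_prod (f := fun a b => f a * g b), ← ENNReal.tsum_mul_right]
  exact tsum_congr fun a => ENNReal.tsum_mul_left.symm

lemma toReal_ratio_eq_of_factorizations {N M K A B C D p q : ℝ≥0∞} (hN : N * q = M * D)
    (hM : M * p = A * C) (hK : K * p = A * B) (hp : p ≠ 0) (hp' : p ≠ ⊤) (hq : q ≠ 0)
    (hq' : q ≠ ⊤) (hK₀ : K ≠ 0) (hK' : K ≠ ⊤) :
    N.toReal / K.toReal = C.toReal / p.toReal * (D.toReal / q.toReal) / (B.toReal / p.toReal) := by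
  have hpr : p.toReal ≠ 0 := ENNReal.toReal_ne_zero.mpr ⟨hp, hp'⟩
  have hqr : q.toReal ≠ 0 := ENNReal.toReal_ne_zero.mpr ⟨hq, hq'⟩
  have hKr : K.toReal ≠ 0 := ENNReal.toReal_ne_zero.mpr ⟨hK₀, hK'⟩
  replace hN := congrArg ENNReal.toReal hN
  replace hM := congrArg ENNReal.toReal hM
  replace hK := congrArg ENNReal.toReal hK
  simp only [ENNReal.toReal_mul] at hN hM hK
  have hBr : B.toReal ≠ 0 := right_ne_zero_of_mul (hK ▸ mul_ne_zero hKr hpr)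
  field_simp
  apply mul_right_cancel₀ hpr
  linear_combination (B.toReal * p.toReal) * hN + (D.toReal * B.toReal) * hM -
    (C.toReal * D.toReal) * hK

namespace AscendingRuns

open Finset

noncomputable def pathWeight (p₀ : ℕ → ℝ≥0∞) (P : ℕ → ℕ → ℝ≥0∞) (n : ℕ) (f : ℕ → ℕ) : ℝ≥0∞ :=
  p₀ (f 1) * ∏ k ∈ Icc 1 (n - 1), P (f k) (f (k + 1))

lemma pathWeight_add (p₀ : ℕ → ℝ≥0∞) (P : ℕ → ℕ → ℝ≥0∞) {s : ℕ} (hs : 1 ≤ s) (b : ℕ)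
    (f : ℕ → ℕ) :
    pathWeight p₀ P (s + b) f * p₀ (f s) =
      pathWeight p₀ P s f * pathWeight p₀ P (b + 1) (fun t => f (s - 1 + t)) := by
  obtain ⟨a, rfl⟩ : ∃ a, s = a + 1 := ⟨s - 1, by omega⟩
  simp only [pathWeight, Finset.prod_Icc_one_eq_prod_range, Nat.add_sub_cancel,
    show a + 1 + b - 1 = a + b by omega, prod_range_add]
  simp only [add_left_comm 1 a, add_assoc]
  ring

def window (f : ℕ → ℕ) (a n : ℕ) : Fin n → ℕ := fun r => f (a + r)

lemma window_eq_window_iff {f g : ℕ → ℕ} {a b n : ℕ} :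
    window f a n = window g b n ↔ ∀ r < n, f (a + r) = g (b + r) := by
  simp [funext_iff, window, Fin.forall_iff]

lemma dependsOn_and_apply_eq {A : (ℕ → ℕ) → Prop} {t : Set ℕ} (hA : DependsOn A t) {k : ℕ}
    (hk : k ∈ t) (i : ℕ) : DependsOn (fun c => A c ∧ c k = i) t := fun _ _ hcd =>
  propext (and_congr (hA hcd).to_iff (by rw [hcd k hk]))

lemma window_shift (f : ℕ → ℕ) (a n : ℕ) : window f a n = window (fun r => f (a + r)) 0 n := by
  ext r
  simp [window]

lemma window_mem_image_iff {A : (ℕ → ℕ) → Prop} {t : Set ℕ} {a n : ℕ} (hA : DependsOn A t)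
    (ht : t ⊆ Set.Ico a (a + n)) (f : ℕ → ℕ) :
    window f a n ∈ (window · a n) '' {c | A c} ↔ A f := by
  refine ⟨fun ⟨c, hc, hcf⟩ => (hA fun k hk => ?_).mp hc, fun hf => ⟨f, hf, rfl⟩⟩
  obtain ⟨hak, hkn⟩ := ht hk
  have := window_eq_window_iff.mp hcf (k - a) (by omega)
  rwa [Nat.add_sub_cancel' hak] at this

lemma window_one_add_iff {f g : ℕ → ℕ} {s : ℕ} (hs : 1 ≤ s) (b : ℕ) :
    window f 1 (s + b) = window g 1 (s + b) ↔
      window f 1 s = window g 1 s ∧ window f s (b + 1) = window g s (b + 1) := by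
  simp only [window_eq_window_iff]
  constructor
  · intro H
    refine ⟨fun r hr => H r (by omega), fun r hr => ?_⟩
    simpa [show 1 + (s - 1 + r) = s + r by omega] using H (s - 1 + r) (by omega)
  · rintro ⟨H₁, H₂⟩ r hr
    by_cases hrs : r < s
    · exact H₁ r hrs
    · simpa [show s + (r + 1 - s) = 1 + r by omega] using H₂ (r + 1 - s) (by omega)

section Markov

variable {Ω : Type*} [MeasurableSpace Ω] {μ : Measure Ω} {X : ℕ → Ω → ℕ}
  {p₀ : ℕ → ℝ≥0∞} {P : ℕ → ℕ → ℝ≥0∞}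

def HasMarkovLaw (μ : Measure Ω) (X : ℕ → Ω → ℕ) (p₀ : ℕ → ℝ≥0∞) (P : ℕ → ℕ → ℝ≥0∞) : Prop :=
  ∀ n, 1 ≤ n → ∀ f : ℕ → ℕ,
    μ {ω | ∀ k, 1 ≤ k → k ≤ n → X k ω = f k} = pathWeight p₀ P n f

lemma measurable_window (hX : ∀ k, Measurable (X k)) (a n : ℕ) :
    Measurable fun ω => window (X · ω) a n :=
  measurable_pi_lambda _ fun r => hX (a + r)

lemma HasMarkovLaw.measure_window_eq (hLaw : HasMarkovLaw μ X p₀ P) {a n : ℕ} (ha : 1 ≤ a)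
    (hn : 1 ≤ n) (e : ℕ → ℕ) :
    μ {ω | window (X · ω) 1 n = window e a n} = pathWeight p₀ P n (fun t => e (a - 1 + t)) := by
  rw [← hLaw n hn]
  congr 1
  ext ω
  simp only [Set.mem_ofPred_eq, window_eq_window_iff]
  constructor
  · intro H k hk hkn
    simpa [show 1 + (k - 1) = k by omega, show a + (k - 1) = a - 1 + k by omega]
      using H (k - 1) (by omega)
  · intro H r hr
    simpa [show a - 1 + (1 + r) = a + r by omega] using H (1 + r) (by omega) (by omega)

lemma HasMarkovLaw.measure_window_pair (hLaw : HasMarkovLaw μ X p₀ P) {s : ℕ} (hs : 1 ≤ s)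
    (b : ℕ) {c d : ℕ → ℕ} (hcd : c s = d 0) :
    μ {ω | window (X · ω) 1 s = window c 1 s ∧ window (X · ω) s (b + 1) = window d 0 (b + 1)} *
        p₀ (c s) =
      μ {ω | window (X · ω) 1 s = window c 1 s} *
        μ {ω | window (X · ω) 1 (b + 1) = window d 0 (b + 1)} := by
  set e : ℕ → ℕ := fun k => if k ≤ s then c k else d (k - s)
  have hec : window e 1 s = window c 1 s :=
    window_eq_window_iff.mpr fun r hr => if_pos (by omega)
  have hed : window e s (b + 1) = window d 0 (b + 1) := by
    refine window_eq_window_iff.mpr fun r _ => ?_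
    rcases Nat.eq_zero_or_pos r with rfl | hr
    · simpa [e] using hcd
    · simp only [e, if_neg (show ¬ s + r ≤ s by omega), Nat.add_sub_cancel_left, zero_add]
  rw [← hec, ← hed, show c s = e s from (if_pos le_rfl).symm]
  simp_rw [← window_one_add_iff hs]
  rw [hLaw.measure_window_eq le_rfl (by omega), hLaw.measure_window_eq le_rfl hs,
    hLaw.measure_window_eq hs (by omega)]
  simpa using pathWeight_add p₀ P hs b e

lemma HasMarkovLaw.measure_window_mem_prod (hX : ∀ k, Measurable (X k))
    (hLaw : HasMarkovLaw μ X p₀ P) {s : ℕ} (hs : 1 ≤ s) (b : ℕ) {i : ℕ}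
    {S : Set (Fin s → ℕ)} {T : Set (Fin (b + 1) → ℕ)}
    (hS : S ⊆ (window · 1 s) '' {c | c s = i}) (hT : T ⊆ (window · 0 (b + 1)) '' {d | d 0 = i}) :
    μ {ω | window (X · ω) 1 s ∈ S ∧ window (X · ω) s (b + 1) ∈ T} * p₀ i =
      μ {ω | window (X · ω) 1 s ∈ S} * μ {ω | window (X · ω) 1 (b + 1) ∈ T} := by
  set ρ : Ω → (Fin s → ℕ) × (Fin (b + 1) → ℕ) :=
    fun ω => (window (X · ω) 1 s, window (X · ω) s (b + 1))
  have hρ : Measurable ρ := (measurable_window hX 1 s).prodMk (measurable_window hX s (b + 1))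
  change μ (ρ ⁻¹' (S ×ˢ T)) * p₀ i = μ ((fun ω => window (X · ω) 1 s) ⁻¹' S) *
    μ ((fun ω => window (X · ω) 1 (b + 1)) ⁻¹' T)
  rw [← tsum_measure_preimage_singleton (Set.to_countable _)
      fun _ _ => hρ (measurableSet_singleton _),
    ← tsum_measure_preimage_singleton (Set.to_countable _)
      fun _ _ => measurable_window hX 1 s (measurableSet_singleton _),
    ← tsum_measure_preimage_singleton (Set.to_countable _)
      fun _ _ => measurable_window hX 1 (b + 1) (measurableSet_singleton _),
    ENNReal.tsum_mul_tsum_eq_tsum_prod, ← (Equiv.Set.prod S T).tsum_eq,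
    ← ENNReal.tsum_mul_right]
  refine tsum_congr fun ⟨⟨y, z⟩, hy, hz⟩ => ?_
  change μ (ρ ⁻¹' {(y, z)}) * p₀ i = μ ((fun ω => window (X · ω) 1 s) ⁻¹' {y}) *
    μ ((fun ω => window (X · ω) 1 (b + 1)) ⁻¹' {z})
  obtain ⟨c, hcs, rfl⟩ := hS hy
  obtain ⟨d, hd₀, rfl⟩ := hT hz
  rw [← hcs]
  convert hLaw.measure_window_pair hs b (hcs.trans hd₀.symm) using 3 <;> ext ω <;>
    simp [ρ, Prod.ext_iff]

theorem HasMarkovLaw.markov_property (hX : ∀ k, Measurable (X k))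
    (hLaw : HasMarkovLaw μ X p₀ P) {A B : (ℕ → ℕ) → Prop} {s b : ℕ} (hs : 1 ≤ s)
    (hA : DependsOn A (Set.Icc 1 s)) (hB : DependsOn B (Set.Iic b)) (i : ℕ) :
    μ {ω | A (X · ω) ∧ X s ω = i ∧ B (fun r => X (s + r) ω)} * p₀ i =
      μ {ω | A (X · ω) ∧ X s ω = i} * μ {ω | X 1 ω = i ∧ B (fun r => X (1 + r) ω)} := by
  set S := (window · 1 s) '' {c | A c ∧ c s = i}
  set T := (window · 0 (b + 1)) '' {c | B c ∧ c 0 = i}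
  have hmemS (f : ℕ → ℕ) : window f 1 s ∈ S ↔ A f ∧ f s = i :=
    window_mem_image_iff (dependsOn_and_apply_eq hA ⟨hs, le_rfl⟩ i)
      (fun k hk => ⟨hk.1, by simp at hk ⊢; omega⟩) f
  have hmemT (f : ℕ → ℕ) : window f 0 (b + 1) ∈ T ↔ B f ∧ f 0 = i :=
    window_mem_image_iff (dependsOn_and_apply_eq hB (Set.mem_Iic.2 (Nat.zero_le b)) i)
      (fun k hk => ⟨Nat.zero_le k, by simp at hk ⊢; omega⟩) f
  have hpair : {ω | A (X · ω) ∧ X s ω = i ∧ B (fun r => X (s + r) ω)} =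
      {ω | window (X · ω) 1 s ∈ S ∧ window (X · ω) s (b + 1) ∈ T} := by
    ext ω
    rw [Set.mem_ofPred_eq, Set.mem_ofPred_eq, window_shift _ s, hmemS, hmemT, add_zero]
    tauto
  have hfuture : {ω | X 1 ω = i ∧ B (fun r => X (1 + r) ω)} =
      {ω | window (X · ω) 1 (b + 1) ∈ T} := by
    ext ω
    rw [Set.mem_ofPred_eq, Set.mem_ofPred_eq, window_shift _ 1, hmemT, add_zero, and_comm]
  have hpast : {ω | A (X · ω) ∧ X s ω = i} = {ω | window (X · ω) 1 s ∈ S} :=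
    Set.ext fun ω => (hmemS _).symm
  rw [hpair, hpast, hfuture]
  exact hLaw.measure_window_mem_prod hX hs b (fun _ ⟨c, hc, hcy⟩ => ⟨c, hc.2, hcy⟩)
    (fun _ ⟨d, hd, hdz⟩ => ⟨d, hd.2, hdz⟩)

end Markov

section Runs

def IsRun (g : ℕ → ℕ) (ℓ : ℕ) : Prop :=
  (∀ r, r + 1 < ℓ → g r ≤ g (r + 1)) ∧ g ℓ < g (ℓ - 1)

lemma dependsOn_isRun (ℓ : ℕ) : DependsOn (IsRun · ℓ) (Set.Iic ℓ) := by
  intro f g hfg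
  have hfg' : ∀ r ≤ ℓ, f r = g r := hfg
  refine propext (and_congr (forall_congr' fun r => imp_congr_right fun hr => ?_) ?_)
  · rw [hfg' r (by omega), hfg' (r + 1) (by omega)]
  · rw [hfg' ℓ le_rfl, hfg' (ℓ - 1) (by omega)]

lemma sInf_descents_eq_iff (f : ℕ → ℕ) (s : ℕ) {ℓ : ℕ} (hℓ : 1 ≤ ℓ) :
    sInf {t | s < t ∧ f t < f (t - 1)} = s + ℓ ↔ IsRun (fun r => f (s + r)) ℓ := by
  set D := {t | s < t ∧ f t < f (t - 1)}
  have hlast : s + ℓ - 1 = s + (ℓ - 1) := by omega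
  constructor
  · intro hD
    have hmem : s + ℓ ∈ D := hD ▸ Nat.sInf_mem (Nat.nonempty_of_pos_sInf (by omega))
    refine ⟨fun r hr => ?_, by simpa [hlast] using hmem.2⟩
    have := Nat.notMem_of_lt_sInf (show s + (r + 1) < sInf D by omega)
    simp only [D, Set.mem_ofPred_eq, not_and, not_lt] at this
    simpa [← add_assoc] using this (by omega)
  · rintro ⟨hasc, hdesc⟩
    refine IsLeast.csInf_eq ⟨⟨by omega, by simpa [hlast] using hdesc⟩, fun t ⟨hst, ht⟩ => ?_⟩
    by_contra! hlt
    have := hasc (t - s - 1) (by omega)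
    dsimp only at this
    rw [show s + (t - s - 1 + 1) = t by omega, show s + (t - s - 1) = t - 1 by omega] at this
    omega

variable {Ω : Type*} {X : ℕ → Ω → ℕ} {ω : Ω}

lemma V_succ (k : ℕ) : V X (k + 1) ω = X (runStart X ω k) ω := rfl

lemma L_succ_eq_iff {k ℓ : ℕ} (hℓ : 1 ≤ ℓ) :
    L X (k + 1) ω = ℓ ↔ IsRun (fun r => X (runStart X ω k + r) ω) ℓ := by
  refine Iff.trans ?_ (sInf_descents_eq_iff (X · ω) (runStart X ω k) hℓ)
  change runStart X ω (k + 1) - runStart X ω k = ℓ ↔ runStart X ω (k + 1) = _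
  omega

lemma runStart_succ_eq {k ℓ : ℕ} (hℓ : 1 ≤ ℓ) (hL : L X (k + 1) ω = ℓ) :
    runStart X ω (k + 1) = runStart X ω k + ℓ := by
  simp only [L, Nat.add_sub_cancel] at hL
  omega

lemma V_two_eq {ℓ : ℕ} (hℓ : 1 ≤ ℓ) (hL : L X 1 ω = ℓ) : V X 2 ω = X (1 + ℓ) ω := by
  rw [V_succ, runStart_succ_eq hℓ hL]
  rfl

lemma VL_succ_eq_iff {k s i ℓ : ℕ} (hs : runStart X ω k = s) (hℓ : 1 ≤ ℓ) :
    (V X (k + 1) ω = i ∧ L X (k + 1) ω = ℓ) ↔ X s ω = i ∧ IsRun (fun r => X (s + r) ω) ℓ := by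
  rw [V_succ, L_succ_eq_iff hℓ, hs]

def runStartOf (h : ℕ → ℕ × ℕ) : ℕ → ℕ
  | 0 => 1
  | k + 1 => runStartOf h k + (h (k + 1)).2

def RunHistory (h : ℕ → ℕ × ℕ) : ℕ → (ℕ → ℕ) → Prop
  | 0, _ => True
  | k + 1, f => RunHistory h k f ∧ f (runStartOf h k) = (h (k + 1)).1 ∧
      IsRun (fun r => f (runStartOf h k + r)) (h (k + 1)).2

lemma one_le_runStartOf (h : ℕ → ℕ × ℕ) (k : ℕ) : 1 ≤ runStartOf h k := by
  induction k with
  | zero => exact le_rfl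
  | succ k ih => exact ih.trans (Nat.le_add_right _ _)

lemma dependsOn_runHistory (h : ℕ → ℕ × ℕ) (k : ℕ) :
    DependsOn (RunHistory h k) (Set.Icc 1 (runStartOf h k)) := by
  induction k with
  | zero => exact fun _ _ _ => rfl
  | succ k ih =>
    intro f g hfg
    have hle : runStartOf h k ≤ runStartOf h (k + 1) := Nat.le_add_right _ _
    have hpos := one_le_runStartOf h k
    refine propext (and_congr (ih fun t ht => hfg t ⟨ht.1, ht.2.trans hle⟩).to_iff
      (and_congr ?_ (dependsOn_isRun _ fun r hr => hfg _ ⟨by omega, ?_⟩).to_iff))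
    · rw [hfg _ ⟨hpos, hle⟩]
    · change _ ≤ runStartOf h k + _
      simp only [Set.mem_Iic] at hr
      omega

lemma forall_Icc_one_succ_iff {p : ℕ → Prop} {k : ℕ} :
    (∀ t, 1 ≤ t → t ≤ k + 1 → p t) ↔ (∀ t, 1 ≤ t → t ≤ k → p t) ∧ p (k + 1) :=
  ⟨fun H => ⟨fun t h₁ h₂ => H t h₁ (by omega), H _ (by omega) le_rfl⟩,
    fun ⟨H, hk⟩ t h₁ h₂ => (Nat.lt_or_eq_of_le h₂).elim (fun h => H t h₁ (by omega)) (· ▸ hk)⟩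

variable {h : ℕ → ℕ × ℕ} {k : ℕ}

lemma runStart_eq_of_runHistory (hℓ : ∀ t, 1 ≤ t → t ≤ k → 1 ≤ (h t).2)
    (H : RunHistory h k (X · ω)) : runStart X ω k = runStartOf h k := by
  induction k with
  | zero => rfl
  | succ k ih =>
    obtain ⟨H, -, hrun⟩ := H
    have hs := ih (fun t h₁ h₂ => hℓ t h₁ (by omega)) H
    rw [← hs] at hrun
    have hℓk := hℓ (k + 1) (by omega) le_rfl
    rw [runStart_succ_eq hℓk ((L_succ_eq_iff hℓk).mpr hrun), hs]
    rfl

lemma history_iff_runHistory (hℓ : ∀ t, 1 ≤ t → t ≤ k → 1 ≤ (h t).2) :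
    (∀ t, 1 ≤ t → t ≤ k → (V X t ω, L X t ω) = h t) ↔ RunHistory h k (X · ω) := by
  induction k with
  | zero => exact ⟨fun _ => trivial, fun _ t h₁ h₂ => absurd h₂ (by omega)⟩
  | succ k ih =>
    have hℓ' : ∀ t, 1 ≤ t → t ≤ k → 1 ≤ (h t).2 := fun t h₁ h₂ => hℓ t h₁ (by omega)
    rw [forall_Icc_one_succ_iff, ih hℓ']
    refine and_congr_right fun H => ?_
    rw [Prod.ext_iff, VL_succ_eq_iff (runStart_eq_of_runHistory hℓ' H) (hℓ _ (by omega) le_rfl)]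

end Runs

section Main

variable {Ω : Type*} [MeasurableSpace Ω] {μ : Measure Ω} {X : ℕ → Ω → ℕ}
  {p₀ : ℕ → ℝ≥0∞} {P : ℕ → ℕ → ℝ≥0∞}

lemma HasMarkovLaw.measure_start_eq (hLaw : HasMarkovLaw μ X p₀ P) (i : ℕ) :
    μ {ω | X 1 ω = i} = p₀ i := by
  convert hLaw 1 le_rfl (fun _ => i) using 1
  · congr 1
    ext ω
    exact ⟨fun h k h₁ h₂ => (show k = 1 by omega) ▸ h, fun h => h 1 le_rfl le_rfl⟩
  · simp [pathWeight]

lemma measure_first_run_eq {i ℓ : ℕ} (hℓ : 1 ≤ ℓ) :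
    μ ({ω | L X 1 ω = ℓ} ∩ {ω | V X 1 ω = i}) =
      μ {ω | X 1 ω = i ∧ IsRun (fun r => X (1 + r) ω) ℓ} :=
  congrArg μ (Set.ext fun _ => and_comm.trans (VL_succ_eq_iff rfl hℓ))

lemma measure_first_run_next_eq {i j ℓ : ℕ} (hℓ : 1 ≤ ℓ) :
    μ ({ω | V X 2 ω = j ∧ L X 1 ω = ℓ} ∩ {ω | V X 1 ω = i}) =
      μ {ω | X 1 ω = i ∧ IsRun (fun r => X (1 + r) ω) ℓ ∧ X (1 + ℓ) ω = j} := by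
  refine congrArg μ (Set.ext fun ω => ⟨fun ⟨⟨hV₂, hL⟩, hV₁⟩ => ?_, fun ⟨hX₁, hrun, hj⟩ => ?_⟩)
  · obtain ⟨hX₁, hrun⟩ := (VL_succ_eq_iff rfl hℓ).mp ⟨hV₁, hL⟩
    exact ⟨hX₁, hrun, V_two_eq hℓ hL ▸ hV₂⟩
  · obtain ⟨hV₁, hL⟩ := (VL_succ_eq_iff (X := X) (k := 0) rfl hℓ).mpr ⟨hX₁, hrun⟩
    exact ⟨⟨V_two_eq hℓ hL ▸ hj, hL⟩, hV₁⟩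

theorem HasMarkovLaw.condP_next_run_eq [IsFiniteMeasure μ] (hX : ∀ k, Measurable (X k))
    (hLaw : HasMarkovLaw μ X p₀ P) {k : ℕ} {h : ℕ → ℕ × ℕ}
    (hℓ : ∀ t, 1 ≤ t → t ≤ k + 1 → 1 ≤ (h t).2) {j lam : ℕ} (hlam : 1 ≤ lam)
    (hi : p₀ (h (k + 1)).1 ≠ 0) (hj : p₀ j ≠ 0)
    (hpos : μ {ω | ∀ t, 1 ≤ t → t ≤ k + 1 → (V X t ω, L X t ω) = h t} ≠ 0) :
    condP μ {ω | V X (k + 1 + 1) ω = j ∧ L X (k + 1 + 1) ω = lam}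
        {ω | ∀ t, 1 ≤ t → t ≤ k + 1 → (V X t ω, L X t ω) = h t} =
      condP μ {ω | V X 2 ω = j ∧ L X 1 ω = (h (k + 1)).2} {ω | V X 1 ω = (h (k + 1)).1}
        * condP μ {ω | L X 1 ω = lam} {ω | V X 1 ω = j}
        / condP μ {ω | L X 1 ω = (h (k + 1)).2} {ω | V X 1 ω = (h (k + 1)).1} := by
  set i := (h (k + 1)).1
  set ℓ := (h (k + 1)).2
  set s := runStartOf h k
  have hℓ₁ : 1 ≤ ℓ := hℓ _ (by omega) le_rfl
  have hhist : {ω | ∀ t, 1 ≤ t → t ≤ k + 1 → (V X t ω, L X t ω) = h t} =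
      {ω | RunHistory h k (X · ω) ∧ X s ω = i ∧ IsRun (fun r => X (s + r) ω) ℓ} :=
    Set.ext fun ω => history_iff_runHistory hℓ
  have hnext : {ω | V X (k + 1 + 1) ω = j ∧ L X (k + 1 + 1) ω = lam} ∩
        {ω | ∀ t, 1 ≤ t → t ≤ k + 1 → (V X t ω, L X t ω) = h t} =
      {ω | RunHistory h (k + 1) (X · ω) ∧ X (runStartOf h (k + 1)) ω = j ∧
        IsRun (fun r => X (runStartOf h (k + 1) + r) ω) lam} := by
    ext ω
    rw [Set.mem_inter_iff, Set.mem_ofPred_eq, Set.mem_ofPred_eq, history_iff_runHistory hℓ,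
      and_comm]
    exact and_congr_right fun H => VL_succ_eq_iff (runStart_eq_of_runHistory hℓ H) hlam
  have hstep : {ω | RunHistory h (k + 1) (X · ω) ∧ X (runStartOf h (k + 1)) ω = j} =
      {ω | RunHistory h k (X · ω) ∧ X s ω = i ∧ IsRun (fun r => X (s + r) ω) ℓ ∧ X (s + ℓ) ω = j} :=
    Set.ext fun ω => by simp only [Set.mem_ofPred_eq, RunHistory, and_assoc]; rfl
  have e₁ := hLaw.markov_property hX (one_le_runStartOf h k) (dependsOn_runHistory h k)
    (dependsOn_isRun ℓ) i
  have e₂ := hLaw.markov_property hX (one_le_runStartOf h k) (dependsOn_runHistory h k)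
    (dependsOn_and_apply_eq (dependsOn_isRun ℓ) (Set.mem_Iic.2 le_rfl) j) i
  have e₃ := hLaw.markov_property hX (one_le_runStartOf h (k + 1)) (dependsOn_runHistory h (k + 1))
    (dependsOn_isRun lam) j
  rw [← hstep] at e₂
  beta_reduce at e₂
  have hV (i : ℕ) : μ {ω | V X 1 ω = i} = p₀ i := hLaw.measure_start_eq i
  simp only [condP]
  rw [hnext, hhist, measure_first_run_next_eq hℓ₁, measure_first_run_eq hℓ₁,
    measure_first_run_eq hlam, hV, hV]
  exact toReal_ratio_eq_of_factorizations e₃ e₂ e₁ hi (hV _ ▸ measure_ne_top _ _) hj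
    (hV _ ▸ measure_ne_top _ _) (hhist ▸ hpos) (measure_ne_top _ _)

end Main

end AscendingRuns

open AscendingRuns

theorem Y_is_homogeneous_markov_general {Ω : Type*} [MeasurableSpace Ω] (μ : Measure Ω)
    [IsProbabilityMeasure μ] (m : ℕ) (X : ℕ → Ω → ℕ)
    (hX : ∀ k, Measurable (X k))
    (hLaw : ∀ n, 1 ≤ n → ∀ f : ℕ → ℕ,
      μ {ω | ∀ k, 1 ≤ k → k ≤ n → X k ω = f k} =
        (if f 1 ∈ Finset.Icc 1 m then (1 : ℝ≥0∞) / m else 0) *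
          ∏ k ∈ Finset.Icc 1 (n - 1),
            (if f (k + 1) ∈ Finset.Icc 1 m ∧ f (k + 1) ≠ f k then (1 : ℝ≥0∞) / (m - 1) else 0))
    (E : Set (ℕ × ℕ))
    (hE : E = {p : ℕ × ℕ | 1 ≤ p.1 ∧ p.1 ≤ m - 1 ∧ 1 ≤ p.2 ∧ p.2 ≤ m - p.1 + 1}
      \ {(1, 1)})
    (k : ℕ) (hk : 1 ≤ k) (j lam : ℕ) (hjl : (j, lam) ∈ E)
    (h : ℕ → ℕ × ℕ) (hh1 : h 1 ∈ E ∪ {(m, 1)}) (hht : ∀ t, 2 ≤ t → t ≤ k → h t ∈ E)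
    (hpos : μ {ω | ∀ t, 1 ≤ t → t ≤ k → (V X t ω, L X t ω) = h t} ≠ 0) :
    condP μ {ω | V X (k + 1) ω = j ∧ L X (k + 1) ω = lam}
        {ω | ∀ t, 1 ≤ t → t ≤ k → (V X t ω, L X t ω) = h t} =
      condP μ {ω | V X 2 ω = j ∧ L X 1 ω = (h k).2} {ω | V X 1 ω = (h k).1}
        * condP μ {ω | L X 1 ω = lam} {ω | V X 1 ω = j}
        / condP μ {ω | L X 1 ω = (h k).2} {ω | V X 1 ω = (h k).1} := by
  obtain ⟨k, rfl⟩ : ∃ k', k = k' + 1 := ⟨k - 1, by omega⟩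
  have hmemE {p : ℕ × ℕ} (hp : p ∈ E) : 1 ≤ p.1 ∧ p.1 ≤ m - 1 ∧ 1 ≤ p.2 := by
    rw [hE] at hp
    exact ⟨hp.1.1, hp.1.2.1, hp.1.2.2.1⟩
  have hj := hmemE hjl
  have hrun (t : ℕ) (h₁ : 1 ≤ t) (h₂ : t ≤ k + 1) : (1 ≤ (h t).1 ∧ (h t).1 ≤ m) ∧ 1 ≤ (h t).2 := by
    obtain rfl | ht := eq_or_lt_of_le h₁
    · rcases hh1 with hE₁ | hm₁
      · have := hmemE hE₁
        omega
      · rw [hm₁]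
        omega
    · have := hmemE (hht t ht h₂)
      omega
  have hp₀ {v : ℕ} (hv : 1 ≤ v ∧ v ≤ m) :
      (if v ∈ Finset.Icc 1 m then (1 : ℝ≥0∞) / m else 0) ≠ 0 := by
    rw [if_pos (Finset.mem_Icc.mpr hv)]
    simp
  exact HasMarkovLaw.condP_next_run_eq
    (p₀ := fun v => if v ∈ Finset.Icc 1 m then (1 : ℝ≥0∞) / m else 0)
    (P := fun a b => if b ∈ Finset.Icc 1 m ∧ b ≠ a then (1 : ℝ≥0∞) / (m - 1) else 0)
    hX hLaw (fun t h₁ h₂ => (hrun t h₁ h₂).2) hj.2.2 (hp₀ (hrun _ (by omega) le_rfl).1)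
    (hp₀ (by omega)) hpos

/-- The process Y = (V_k, L_k)_{k≥1} is a homogeneous Markov chain with
transition probabilities P((i,ℓ),(j,λ)) = Φ_ℓ(i,j)·φ_λ(j)/φ_ℓ(i): conditionally on any
history (Y_1, ..., Y_k) ending in state (i,ℓ), the probability that Y_{k+1} = (j,λ)
equals Φ_ℓ(i,j)·φ_λ(j)/φ_ℓ(i), where Φ_ℓ(i,j) = P(V_2 = j, L_1 = ℓ | V_1 = i) and
φ_ℓ(i) = P(L_1 = ℓ | V_1 = i). -/
theorem Y_is_homogeneous_markov {Ω : Type*} [MeasurableSpace Ω] (μ : Measure Ω)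
    [IsProbabilityMeasure μ] (m : ℕ) (hm : 2 ≤ m) (X : ℕ → Ω → ℕ)
    (hX : ∀ k, Measurable (X k))
    (hLaw : ∀ n, 1 ≤ n → ∀ f : ℕ → ℕ,
      μ {ω | ∀ k, 1 ≤ k → k ≤ n → X k ω = f k} =
        (if f 1 ∈ Finset.Icc 1 m then (1 : ℝ≥0∞) / m else 0) *
          ∏ k ∈ Finset.Icc 1 (n - 1),
            (if f (k + 1) ∈ Finset.Icc 1 m ∧ f (k + 1) ≠ f k then (1 : ℝ≥0∞) / (m - 1) else 0))
    (E : Set (ℕ × ℕ))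
    (hE : E = {p : ℕ × ℕ | 1 ≤ p.1 ∧ p.1 ≤ m - 1 ∧ 1 ≤ p.2 ∧ p.2 ≤ m - p.1 + 1}
      \ {(1, 1)})
    (k : ℕ) (hk : 1 ≤ k) (j lam : ℕ) (hjl : (j, lam) ∈ E)
    (h : ℕ → ℕ × ℕ) (hh1 : h 1 ∈ E ∪ {(m, 1)}) (hht : ∀ t, 2 ≤ t → t ≤ k → h t ∈ E)
    (hpos : μ {ω | ∀ t, 1 ≤ t → t ≤ k → (V X t ω, L X t ω) = h t} ≠ 0) :
    condP μ {ω | V X (k + 1) ω = j ∧ L X (k + 1) ω = lam}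
        {ω | ∀ t, 1 ≤ t → t ≤ k → (V X t ω, L X t ω) = h t} =
      condP μ {ω | V X 2 ω = j ∧ L X 1 ω = (h k).2} {ω | V X 1 ω = (h k).1}
        * condP μ {ω | L X 1 ω = lam} {ω | V X 1 ω = j}
        / condP μ {ω | L X 1 ω = (h k).2} {ω | V X 1 ω = (h k).1} :=
  Y_is_homogeneous_markov_general μ m X hX hLaw E hE k hk j lam hjl h hh1 hht hpos
end
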